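/- arXiv:1401.0237 — 10 statements merged into one kernel-verified Lean document; each statement's English description precedes it below -/
import Mathlib

section
/- Let f : ℂ → ℂ be entire, let a, b ∈ ℝ and z ∈ ℂ. Then the series ∑_{k=0}^∞ (a^k · cos(b + kπ/2) / k!) · f^{(k)}(z) converges, with sum (1/2)·(e^{ib}·f(z + ia) + e^{-ib}·f(z - ia)); i.e., HasSum (fun k => (a^k * cos(b + k*π/2) / k!) * f^{(k)}(z)) ((e^{ib} * f(z + a*I) + e^{-ib} * f(z - a*I)) / 2). -/
/-!
Euler's formula splits `cos (aD + b)` as `(e^{ib} e^{iaD} + e^{-ib} e^{-iaD}) / 2`, and for an entire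
function the exponential `e^{wD}` of the differentiation operator is translation by `w`: its series
`∑ wᵏ f⁽ᵏ⁾(z) / k!` is the Taylor series of `f` at `z`, evaluated at `z + w`.
-/

open Complex Real

lemma Complex.cos_add_nat_mul_pi_div_two (x : ℂ) (k : ℕ) :
    cos (x + k * π / 2) = (exp (x * I) * I ^ k + exp (-(x * I)) * (-I) ^ k) / 2 := by
  have h_pos : exp (k * π / 2 * I) = I ^ k := by
    rw [mul_div_assoc, mul_assoc, exp_nat_mul, exp_pi_div_two_mul_I]
  have h_neg : exp (-(k * π / 2 * I)) = (-I) ^ k := by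
    rw [exp_neg, h_pos, ← inv_pow, inv_I]
  rw [cos, neg_mul, add_mul, neg_add, exp_add, exp_add, h_pos, h_neg]

theorem cos_operator (f : ℂ → ℂ) (hf : Differentiable ℂ f) (a b : ℝ) (z : ℂ) :
    HasSum
      (fun k : ℕ => ((a ^ k * Real.cos (b + k * Real.pi / 2) / (Nat.factorial k) : ℝ) : ℂ)
        * iteratedDeriv k f z)
      ((Complex.exp (b * Complex.I) * f (z + a * Complex.I)
        + Complex.exp (-(b * Complex.I)) * f (z - a * Complex.I)) / 2) := by
  have h_plus := hasSum_taylorSeries_of_entire hf z (z + a * I)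
  have h_minus := hasSum_taylorSeries_of_entire hf z (z - a * I)
  simp only [add_sub_cancel_left, sub_sub_cancel_left, smul_eq_mul] at h_plus h_minus
  refine (((h_plus.mul_left (exp (b * I))).add
    (h_minus.mul_left (exp (-(b * I))))).div_const 2).congr_fun fun k => ?_
  push_cast
  rw [cos_add_nat_mul_pi_div_two, neg_mul_eq_mul_neg (a : ℂ), mul_pow, mul_pow]
  ring
end

section
/- Let f : ℂ → ℂ be entire, let a, b ∈ ℝ and z ∈ ℂ. Then the series ∑_{k=0}^∞ (a^k · sin(b + kπ/2) / k!) · f^{(k)}(z) converges, with sum (1/(2i))·(e^{ib}·f(z + ia) - e^{-ib}·f(z - ia)); i.e., HasSum (fun k => (a^k * sin(b + k*π/2) / k!) * f^{(k)}(z)) ((e^{ib} * f(z + a*I) - e^{-ib} * f(z - a*I)) / (2*I)). -/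
/-!
By Euler's formula `sin (b + kπ/2) = (e^{ib} iᵏ - e^{-ib} (-i)ᵏ) / (2i)`, so the
series splits into `e^{ib}/(2i)` times the Taylor series of `f` at `z` evaluated at `z + ia`, minus
`e^{-ib}/(2i)` times the one evaluated at `z - ia`. Both converge to the values of `f` there since
`f` is entire.
-/

open Complex Real

namespace Complex

theorem hasSum_iteratedDeriv_mul_pow_of_entire {f : ℂ → ℂ} (hf : Differentiable ℂ f) (z h : ℂ) :
    HasSum (fun k : ℕ ↦ h ^ k / (Nat.factorial k) * iteratedDeriv k f z) (f (z + h)) := by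
  refine (hasSum_taylorSeries_of_entire hf z (z + h)).congr_fun fun k ↦ ?_
  rw [add_sub_cancel_left, smul_eq_mul, smul_eq_mul]
  ring

theorem exp_nat_mul_pi_div_two_mul_I (k : ℕ) : exp (k * π / 2 * I) = I ^ k := by
  rw [show (k * π / 2 * I : ℂ) = k * (π / 2 * I) by ring, exp_nat_mul, exp_pi_div_two_mul_I]

theorem sin_add_nat_mul_pi_div_two (w : ℂ) (k : ℕ) :
    sin (w + k * π / 2) = (exp (w * I) * I ^ k - exp (-(w * I)) * (-I) ^ k) / (2 * I) := by
  have h_pos : exp ((w + k * π / 2) * I) = exp (w * I) * I ^ k := by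
    rw [add_mul, exp_add, exp_nat_mul_pi_div_two_mul_I]
  have h_neg : exp (-(w + k * π / 2) * I) = exp (-(w * I)) * (-I) ^ k := by
    rw [neg_mul, add_mul, neg_add, exp_add, exp_neg (k * π / 2 * I),
      exp_nat_mul_pi_div_two_mul_I, ← inv_pow, inv_I]
  rw [sin, h_pos, h_neg]
  field_simp
  rw [I_sq]
  ring

end Complex

theorem sin_operator (f : ℂ → ℂ) (hf : Differentiable ℂ f) (a b : ℝ) (z : ℂ) :
    HasSum
      (fun k : ℕ => ((a ^ k * Real.sin (b + k * Real.pi / 2) / (Nat.factorial k) : ℝ) : ℂ)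
        * iteratedDeriv k f z)
      ((Complex.exp (b * Complex.I) * f (z + a * Complex.I)
        - Complex.exp (-(b * Complex.I)) * f (z - a * Complex.I)) / (2 * Complex.I)) := by
  have h_plus := (hasSum_iteratedDeriv_mul_pow_of_entire hf z (a * I)).mul_left (exp (b * I))
  have h_minus := (hasSum_iteratedDeriv_mul_pow_of_entire hf z (-(a * I))).mul_left
    (exp (-(b * I)))
  rw [← sub_eq_add_neg] at h_minus
  refine ((h_plus.sub h_minus).div_const (2 * I)).congr_fun fun k ↦ ?_
  push_cast
  rw [sin_add_nat_mul_pi_div_two, mul_pow, neg_pow (a * I), mul_pow]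
  ring
end

section
/- Let r ≥ 0, a > 0, γ ≥ 0, δ ∈ ℝ. Let P be a nonzero polynomial with real coefficients such that every complex root of P lies in the strip S(r) = {w ∈ ℂ : |Im w| ≤ r}, and assume that γ > 0 or P has degree at least 1. Define f : ℂ → ℂ by f(z) = exp(δz - γz²)·P(z). If z = x + iy ∈ ℂ satisfies y > 0 and y² > r² - a², then |f(z - ia)| < |f(z + ia)|. -/
/-!
Write `f = E · P` with `E = exp(δz - γz²)`. Moving from `z - ia` to `z + ia` multiplies `|E|` by
`exp (4γa Im z) ≥ 1`. For the polynomial, `|P(ζ)|² = lc² ∏ |ζ - w| |ζ̄ - w|` over the complex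
roots `w` (as `|P(ζ)| = |P(ζ̄)|`), and each factor `|ζ - w|² |ζ̄ - w|²` grows strictly from
`ζ = z - ia` to `ζ = z + ia` as soon as `(Im w)² < (Im z)² + a²`. Strictness comes from `γ > 0`
or from the existence of a root.
-/

open Complex Polynomial ComplexConjugate

theorem Multiset.prod_map_lt_prod_map₀ {ι R : Type*} [CommSemiring R] [PartialOrder R]
    [IsStrictOrderedRing R] {s : Multiset ι} (hs : s ≠ 0) {f g : ι → R}
    (h0 : ∀ i ∈ s, 0 ≤ f i) (h : ∀ i ∈ s, f i < g i) :
    (s.map f).prod < (s.map g).prod := by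
  obtain ⟨i, hi⟩ := Multiset.exists_mem_of_ne_zero hs
  obtain ⟨t, rfl⟩ := Multiset.exists_cons_of_mem hi
  have ht0 : ∀ j ∈ t, 0 ≤ f j := fun j hj => h0 j (Multiset.mem_cons_of_mem hj)
  have hgt : 0 < (t.map g).prod := Multiset.prod_pos fun x hx => by
    obtain ⟨j, hj, rfl⟩ := Multiset.mem_map.mp hx
    exact (ht0 j hj).trans_lt (h j (Multiset.mem_cons_of_mem hj))
  rw [Multiset.map_cons, Multiset.map_cons, Multiset.prod_cons, Multiset.prod_cons,
    mul_comm (f i), mul_comm (g i)]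
  exact mul_lt_mul' (Multiset.prod_map_le_prod_map₀ f g ht0
      fun j hj => (h j (Multiset.mem_cons_of_mem hj)).le)
    (h i (Multiset.mem_cons_self i t)) (h0 i (Multiset.mem_cons_self i t)) hgt

theorem Polynomial.norm_aeval_sq_eq_prod_aroots (P : ℝ[X]) (ζ : ℂ) :
    ‖aeval ζ P‖ ^ 2 =
      P.leadingCoeff ^ 2 * ((P.aroots ℂ).map fun w => ‖ζ - w‖ * ‖conj ζ - w‖).prod := by
  have hsplit (ξ : ℂ) : ‖aeval ξ P‖ = |P.leadingCoeff| * ((P.aroots ℂ).map (‖ξ - ·‖)).prod := by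
    rw [Splits.aeval_eq_prod_aroots (IsAlgClosed.splits _), ← normHom_apply, map_mul,
      map_multiset_prod, Multiset.map_map]
    simp
  calc ‖aeval ζ P‖ ^ 2 = ‖aeval ζ P‖ * ‖aeval (conj ζ) P‖ := by
        rw [aeval_conj, norm_conj, sq]
    _ = _ := by rw [hsplit, hsplit, Multiset.prod_map_mul, ← sq_abs P.leadingCoeff]; ring

theorem norm_sub_mul_norm_conj_sub_lt (z w : ℂ) {a : ℝ} (ha : 0 < a) (hy : 0 < z.im)
    (hw : w.im ^ 2 < z.im ^ 2 + a ^ 2) :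
    ‖z - a * I - w‖ * ‖conj (z - a * I) - w‖ < ‖z + a * I - w‖ * ‖conj (z + a * I) - w‖ := by
  apply lt_of_pow_lt_pow_left₀ 2 (by positivity)
  simp only [mul_pow, Complex.sq_norm, normSq_apply, sub_re, sub_im, add_re, add_im, conj_re,
    conj_im, mul_re, mul_im, ofReal_re, ofReal_im, I_re, I_im]
  -- the difference of the two sides is `8 a (Im z) ((Re z - Re w)² + (Im z)² + a² - (Im w)²)`
  nlinarith [mul_nonneg (mul_nonneg ha.le hy.le) (sq_nonneg (z.re - w.re)),
    mul_pos (mul_pos ha hy) (sub_pos.mpr hw)]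

section ShiftedPolynomial

variable {P : ℝ[X]} {z : ℂ} {a : ℝ}

theorem Polynomial.norm_aeval_sub_le_norm_aeval_add (ha : 0 < a) (hy : 0 < z.im)
    (hroots : ∀ w ∈ P.aroots ℂ, w.im ^ 2 < z.im ^ 2 + a ^ 2) :
    ‖aeval (z - a * I) P‖ ≤ ‖aeval (z + a * I) P‖ := by
  apply le_of_pow_le_pow_left₀ two_ne_zero (norm_nonneg _)
  rw [norm_aeval_sq_eq_prod_aroots, norm_aeval_sq_eq_prod_aroots]
  exact mul_le_mul_of_nonneg_left (Multiset.prod_map_le_prod_map₀ _ _ (fun _ _ => by positivity)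
    fun w hw => (norm_sub_mul_norm_conj_sub_lt z w ha hy (hroots w hw)).le) (sq_nonneg _)

theorem Polynomial.norm_aeval_sub_lt_norm_aeval_add (ha : 0 < a) (hy : 0 < z.im)
    (hroots : ∀ w ∈ P.aroots ℂ, w.im ^ 2 < z.im ^ 2 + a ^ 2) (hdeg : P.natDegree ≠ 0) :
    ‖aeval (z - a * I) P‖ < ‖aeval (z + a * I) P‖ := by
  have hP : P ≠ 0 := by rintro rfl; exact hdeg natDegree_zero
  have hne : P.aroots ℂ ≠ 0 := by
    rw [← Multiset.card_pos, IsAlgClosed.card_aroots_eq_natDegree]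
    exact Nat.pos_of_ne_zero hdeg
  apply lt_of_pow_lt_pow_left₀ 2 (norm_nonneg _)
  rw [norm_aeval_sq_eq_prod_aroots, norm_aeval_sq_eq_prod_aroots]
  exact mul_lt_mul_of_pos_left (Multiset.prod_map_lt_prod_map₀ hne (fun _ _ => by positivity)
    fun w hw => norm_sub_mul_norm_conj_sub_lt z w ha hy (hroots w hw))
    (sq_pos_of_ne_zero (leadingCoeff_ne_zero.mpr hP))

end ShiftedPolynomial

theorem re_exponent_add_mul_I (δ γ a : ℝ) (z : ℂ) :
    (δ * (z + a * I) - γ * (z + a * I) ^ 2).re =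
      (δ * (z - a * I) - γ * (z - a * I) ^ 2).re + 4 * γ * a * z.im := by
  simp only [sub_re, add_re, mul_re, sq, sub_im, add_im, mul_im, ofReal_re, ofReal_im, I_re, I_im]
  ring

theorem modulus_inequality_general (r a γ δ : ℝ) (ha : 0 < a) (hγ : 0 ≤ γ)
    (P : Polynomial ℝ) (hP : P ≠ 0)
    (hroots : ∀ w : ℂ, Polynomial.aeval w P = 0 → |w.im| ≤ r)
    (hnontriv : 0 < γ ∨ 1 ≤ P.natDegree)
    (f : ℂ → ℂ)
    (hf : ∀ z : ℂ, f z = Complex.exp ((δ : ℂ) * z - (γ : ℂ) * z ^ 2) * Polynomial.aeval z P)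
    (z : ℂ) (hy : 0 < z.im) (hstrip : z.im ^ 2 > r ^ 2 - a ^ 2) :
    ‖f (z - a * Complex.I)‖ < ‖f (z + a * Complex.I)‖ := by
  have hroots' : ∀ w ∈ P.aroots ℂ, w.im ^ 2 < z.im ^ 2 + a ^ 2 := fun w hw => by
    have him := hroots w (mem_aroots.mp hw).2
    nlinarith [sq_abs w.im, abs_nonneg w.im]
  rw [hf, hf, norm_mul, norm_mul, norm_exp, norm_exp, re_exponent_add_mul_I, Real.exp_add]
  set E := Real.exp (δ * (z - a * I) - γ * (z - a * I) ^ 2).re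
  have hE : 0 < E := Real.exp_pos _
  rcases hnontriv with hγpos | hdeg
  · have hroot : aeval (z + a * I) P ≠ 0 := fun h => by
      have := hroots' _ (mem_aroots.mpr ⟨hP, h⟩)
      simp only [add_im, mul_im, ofReal_re, ofReal_im, I_re, I_im] at this
      nlinarith
    calc E * ‖aeval (z - a * I) P‖ ≤ E * ‖aeval (z + a * I) P‖ := by
          gcongr; exact norm_aeval_sub_le_norm_aeval_add ha hy hroots'
      _ < E * Real.exp (4 * γ * a * z.im) * ‖aeval (z + a * I) P‖ := by
          gcongr; exact lt_mul_of_one_lt_right hE (Real.one_lt_exp_iff.mpr (by positivity))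
  · calc E * ‖aeval (z - a * I) P‖ < E * ‖aeval (z + a * I) P‖ := by
          gcongr; exact norm_aeval_sub_lt_norm_aeval_add ha hy hroots' (by omega)
      _ ≤ E * Real.exp (4 * γ * a * z.im) * ‖aeval (z + a * I) P‖ := by
          gcongr; exact le_mul_of_one_le_right hE.le (Real.one_le_exp (by positivity))

theorem modulus_inequality (r a γ δ : ℝ) (hr : 0 ≤ r) (ha : 0 < a) (hγ : 0 ≤ γ)
    (P : Polynomial ℝ) (hP : P ≠ 0)
    (hroots : ∀ w : ℂ, Polynomial.aeval w P = 0 → |w.im| ≤ r)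
    (hnontriv : 0 < γ ∨ 1 ≤ P.natDegree)
    (f : ℂ → ℂ)
    (hf : ∀ z : ℂ, f z = Complex.exp ((δ : ℂ) * z - (γ : ℂ) * z ^ 2) * Polynomial.aeval z P)
    (z : ℂ) (hy : 0 < z.im) (hstrip : z.im ^ 2 > r ^ 2 - a ^ 2) :
    ‖f (z - a * Complex.I)‖ < ‖f (z + a * Complex.I)‖ :=
  modulus_inequality_general r a γ δ ha hγ P hP hroots hnontriv f hf z hy hstrip
end

section
/- Let r ≥ 0, a > 0, b ∈ ℝ, γ ≥ 0, δ ∈ ℝ. Let P be a nonzero polynomial with real coefficients such that every complex root of P lies in the strip S(r) = {w ∈ ℂ : |Im w| ≤ r}, and define f : ℂ → ℂ by f(z) = exp(δz - γz²)·P(z). Let G(z) = e^{ib}·f(z + ia) + e^{-ib}·f(z - ia) (which equals 2·cos(aD + b)f(z)). If G is not identically zero, then every zero z of G satisfies (Im z)² ≤ max(r² - a², 0). -/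
/-!
If `G z = 0` then `‖f (z + a I)‖ = ‖f (z - a I)‖`. But for `Im z = y > 0` with
`y² + a² > r²` the point `z + a I` wins strictly: the Gaussian factor gains `e^{4aγy} ≥ 1`,
and since `P` is real, `‖P u‖² = P u · P ū = lc² ∏_v ‖(u - v)(ū - v)‖` over the roots `v`,
where each factor strictly increases from `u = z - a I` to `u = z + a I` because
`‖(u - v)(ū - v)‖²` changes by `8ay(c + y² + a² - (Im v)²)`, `c = (Re z - Re v)²`.
The lower half-plane follows by conjugation. Equality is possible only when `γ = 0` and `P` is
constant; then `G z = e^{δz} G 0`, which vanishes nowhere or everywhere.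
-/

open Complex Polynomial ComplexConjugate

theorem prod_add_sq_lt_prod_add_sq {a y t c : ℝ} (ha : 0 < a) (hy : 0 < y) (hc : 0 ≤ c)
    (ht : t ^ 2 < y ^ 2 + a ^ 2) :
    (c + (y - a - t) ^ 2) * (c + (y - a + t) ^ 2)
      < (c + (y + a - t) ^ 2) * (c + (y + a + t) ^ 2) := by
  have hdiff : (c + (y + a - t) ^ 2) * (c + (y + a + t) ^ 2)
      - (c + (y - a - t) ^ 2) * (c + (y - a + t) ^ 2)
      = 8 * a * y * (c + y ^ 2 + a ^ 2 - t ^ 2) := by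
    ring
  have : 0 < 8 * a * y * (c + y ^ 2 + a ^ 2 - t ^ 2) := by
    have : 0 < c + y ^ 2 + a ^ 2 - t ^ 2 := by linarith
    positivity
  linarith

theorem norm_mul_conj_sub_lt {a : ℝ} {w v : ℂ} (ha : 0 < a) (hw : 0 < w.im)
    (hv : v.im ^ 2 < w.im ^ 2 + a ^ 2) :
    ‖(w - a * I - v) * (conj (w - a * I) - v)‖ < ‖(w + a * I - v) * (conj (w + a * I) - v)‖ := by
  rw [← sq_lt_sq₀ (norm_nonneg _) (norm_nonneg _), norm_mul, norm_mul, mul_pow, mul_pow]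
  simp only [Complex.sq_norm, normSq_apply, sub_re, add_re, sub_im, add_im, conj_re, conj_im,
    mul_re, mul_im, ofReal_re, ofReal_im, I_re, I_im]
  have := prod_add_sq_lt_prod_add_sq ha hw (sq_nonneg (w.re - v.re)) hv
  linarith

theorem Multiset.prod_map_lt_prod_map_of_nonneg {R ι : Type*} [CommSemiring R] [PartialOrder R]
    [IsStrictOrderedRing R] {s : Multiset ι} (hs : s ≠ 0) (f g : ι → R)
    (h0 : ∀ i ∈ s, 0 ≤ f i) (h : ∀ i ∈ s, f i < g i) :
    (s.map f).prod < (s.map g).prod := by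
  obtain ⟨i, hi⟩ := Multiset.exists_mem_of_ne_zero hs
  obtain ⟨t, rfl⟩ := Multiset.exists_cons_of_mem hi
  simp only [Multiset.map_cons, Multiset.prod_cons]
  have ht0 : ∀ j ∈ t, 0 ≤ f j := fun j hj => h0 j (Multiset.mem_cons_of_mem hj)
  have ht : ∀ j ∈ t, f j < g j := fun j hj => h j (Multiset.mem_cons_of_mem hj)
  exact mul_lt_mul_of_lt_of_le_of_nonneg_of_pos (h i hi)
    (Multiset.prod_map_le_prod_map₀ f g ht0 fun j hj => (ht j hj).le) (h0 i hi)
    (Multiset.prod_pos fun x hx => by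
      obtain ⟨j, hj, rfl⟩ := Multiset.mem_map.mp hx
      exact (ht0 j hj).trans_lt (ht j hj))


noncomputable def expQuadPoly (δ γ : ℝ) (P : ℝ[X]) (u : ℂ) : ℂ :=
  exp (δ * u - γ * u ^ 2) * aeval u P

/-- `2 cos(aD + b) F`, for `F` entire. -/
noncomputable def cosShift (b a : ℝ) (F : ℂ → ℂ) (u : ℂ) : ℂ :=
  exp (b * I) * F (u + a * I) + exp (-(b * I)) * F (u - a * I)

theorem norm_aeval_sq_eq_prod_roots (P : ℝ[X]) (u : ℂ) :
    ‖aeval u P‖ ^ 2 = P.leadingCoeff ^ 2 *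
      ((P.map (algebraMap ℝ ℂ)).roots.map fun v => ‖(u - v) * (conj u - v)‖).prod := by
  have hfactor (x : ℂ) : aeval x P =
      P.leadingCoeff * ((P.map (algebraMap ℝ ℂ)).roots.map (x - ·)).prod := by
    have := congrArg (eval x) (IsAlgClosed.splits (P.map (algebraMap ℝ ℂ))).eq_prod_roots
    rw [eval_map_algebraMap] at this
    simp [this, eval_multiset_prod, leadingCoeff_map, Multiset.map_map]
  have hnorm (s : Multiset ℂ) : ‖s.prod‖ = (s.map (‖·‖)).prod :=
    map_multiset_prod (normHom (α := ℂ)) s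
  calc ‖aeval u P‖ ^ 2 = ‖aeval u P * aeval (conj u) P‖ := by
        rw [aeval_conj, norm_mul, RCLike.norm_conj, sq]
    _ = _ := by
        rw [hfactor, hfactor, mul_mul_mul_comm, ← Multiset.prod_map_mul, norm_mul, hnorm,
          Multiset.map_map, ← ofReal_mul, norm_real, ← sq, Real.norm_eq_abs, abs_sq]
        rfl

theorem aeval_eq_zero_of_mem_roots_map {P : ℝ[X]} {v : ℂ}
    (hv : v ∈ (P.map (algebraMap ℝ ℂ)).roots) : aeval v P = 0 := by
  rw [← eval_map_algebraMap]
  exact isRoot_of_mem_roots hv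

section ShiftComparison

variable (P : ℝ[X]) {a : ℝ} {w : ℂ}

theorem norm_aeval_sub_I_le (ha : 0 < a) (hw : 0 < w.im)
    (hroots : ∀ v : ℂ, aeval v P = 0 → v.im ^ 2 < w.im ^ 2 + a ^ 2) :
    ‖aeval (w - a * I) P‖ ≤ ‖aeval (w + a * I) P‖ := by
  rw [← sq_le_sq₀ (norm_nonneg _) (norm_nonneg _), norm_aeval_sq_eq_prod_roots,
    norm_aeval_sq_eq_prod_roots]
  exact mul_le_mul_of_nonneg_left (Multiset.prod_map_le_prod_map₀ _ _ (fun _ _ => norm_nonneg _)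
    fun v hv => (norm_mul_conj_sub_lt ha hw (hroots v (aeval_eq_zero_of_mem_roots_map hv))).le)
    (sq_nonneg _)

theorem norm_aeval_sub_I_lt (ha : 0 < a) (hw : 0 < w.im)
    (hroots : ∀ v : ℂ, aeval v P = 0 → v.im ^ 2 < w.im ^ 2 + a ^ 2) (hdeg : 0 < P.natDegree) :
    ‖aeval (w - a * I) P‖ < ‖aeval (w + a * I) P‖ := by
  have hne : (P.map (algebraMap ℝ ℂ)).roots ≠ 0 := by
    rw [← Multiset.card_pos, ← (IsAlgClosed.splits _).natDegree_eq_card_roots, natDegree_map]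
    exact hdeg
  have hlc : P.leadingCoeff ≠ 0 := leadingCoeff_ne_zero.mpr (ne_zero_of_natDegree_gt hdeg)
  rw [← sq_lt_sq₀ (norm_nonneg _) (norm_nonneg _), norm_aeval_sq_eq_prod_roots,
    norm_aeval_sq_eq_prod_roots]
  exact mul_lt_mul_of_pos_left (Multiset.prod_map_lt_prod_map_of_nonneg hne _ _
    (fun _ _ => norm_nonneg _)
    fun v hv => norm_mul_conj_sub_lt ha hw (hroots v (aeval_eq_zero_of_mem_roots_map hv)))
    (by positivity)

end ShiftComparison

theorem norm_exp_quad_add_I (δ γ a : ℝ) (w : ℂ) :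
    ‖exp (δ * (w + a * I) - γ * (w + a * I) ^ 2)‖
      = Real.exp (4 * a * γ * w.im) * ‖exp (δ * (w - a * I) - γ * (w - a * I) ^ 2)‖ := by
  rw [norm_exp, norm_exp, ← Real.exp_add]
  congr 1
  simp only [sq, sub_re, mul_re, ofReal_re, add_re, I_re, mul_zero, ofReal_im, I_im, mul_one,
    sub_self, add_zero, add_im, mul_im, zero_mul, sub_zero, sub_im]
  ring

theorem norm_expQuadPoly_sub_I_lt {δ γ a : ℝ} {P : ℝ[X]} {w : ℂ} (hγ : 0 ≤ γ) (ha : 0 < a)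
    (hw : 0 < w.im) (hroots : ∀ v : ℂ, aeval v P = 0 → v.im ^ 2 < w.im ^ 2 + a ^ 2)
    (hnd : 0 < γ ∨ 0 < P.natDegree) :
    ‖expQuadPoly δ γ P (w - a * I)‖ < ‖expQuadPoly δ γ P (w + a * I)‖ := by
  rw [expQuadPoly, expQuadPoly, norm_mul, norm_mul, norm_exp_quad_add_I, mul_assoc,
    mul_left_comm]
  refine mul_lt_mul_of_pos_left ?_ (norm_pos_iff.mpr (exp_ne_zero _))
  rcases hnd with hγ | hdeg
  · have hne : aeval (w + a * I) P ≠ 0 := fun h => by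
      have := hroots _ h
      simp only [add_im, mul_im, ofReal_re, ofReal_im, I_re, I_im] at this
      nlinarith
    calc ‖aeval (w - a * I) P‖ ≤ ‖aeval (w + a * I) P‖ := norm_aeval_sub_I_le P ha hw hroots
      _ < _ := lt_mul_of_one_lt_left (norm_pos_iff.mpr hne)
        (Real.one_lt_exp_iff.mpr (by positivity))
  · calc ‖aeval (w - a * I) P‖ < ‖aeval (w + a * I) P‖ := norm_aeval_sub_I_lt P ha hw hroots hdeg
      _ ≤ _ := le_mul_of_one_le_left (norm_nonneg _) (Real.one_le_exp (by positivity))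

theorem norm_expQuadPoly_conj (δ γ : ℝ) (P : ℝ[X]) (u : ℂ) :
    ‖expQuadPoly δ γ P (conj u)‖ = ‖expQuadPoly δ γ P u‖ := by
  have : expQuadPoly δ γ P (conj u) = conj (expQuadPoly δ γ P u) := by
    simp [expQuadPoly, ← exp_conj, aeval_conj]
  rw [this, RCLike.norm_conj]

theorem norm_sub_I_eq_of_cosShift_eq_zero {b a : ℝ} {F : ℂ → ℂ} {z : ℂ}
    (h : cosShift b a F z = 0) : ‖F (z - a * I)‖ = ‖F (z + a * I)‖ := by
  have := congrArg norm (eq_neg_of_add_eq_zero_left h)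
  simpa [norm_exp] using this.symm

theorem cosShift_expQuadPoly_of_natDegree_eq_zero {P : ℝ[X]} (hP : P.natDegree = 0)
    (b a δ : ℝ) (u : ℂ) :
    cosShift b a (expQuadPoly δ 0 P) u = exp (δ * u) * cosShift b a (expQuadPoly δ 0 P) 0 := by
  obtain ⟨c, rfl⟩ := natDegree_eq_zero.mp hP
  simp only [cosShift, expQuadPoly, mul_add, mul_sub, ofReal_zero, zero_mul, sub_zero, zero_add,
    zero_sub, mul_neg, exp_add, exp_sub, exp_neg, aeval_C, coe_algebraMap, even_two, Even.neg_pow]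
  ring

theorem cos_operator_strip_decrease_general (r a b γ δ : ℝ) (ha : 0 < a) (hγ : 0 ≤ γ)
    (P : Polynomial ℝ)
    (hroots : ∀ w : ℂ, Polynomial.aeval w P = 0 → |w.im| ≤ r)
    (f G : ℂ → ℂ)
    (hf : ∀ z : ℂ, f z = Complex.exp ((δ : ℂ) * z - (γ : ℂ) * z ^ 2) * Polynomial.aeval z P)
    (hG : ∀ z : ℂ, G z = Complex.exp ((b : ℂ) * Complex.I) * f (z + a * Complex.I)
        + Complex.exp (-((b : ℂ) * Complex.I)) * f (z - a * Complex.I))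
    (hG0 : ∃ z : ℂ, G z ≠ 0) :
    ∀ z : ℂ, G z = 0 → z.im ^ 2 ≤ max (r ^ 2 - a ^ 2) 0 := by
  obtain rfl : f = expQuadPoly δ γ P := funext hf
  obtain rfl : G = cosShift b a (expQuadPoly δ γ P) := funext hG
  intro z hz
  by_contra! hfar
  by_cases hdeg : γ = 0 ∧ P.natDegree = 0
  · obtain ⟨rfl, hdeg⟩ := hdeg
    obtain ⟨z₀, hz₀⟩ := hG0
    rw [cosShift_expQuadPoly_of_natDegree_eq_zero hdeg] at hz hz₀
    exact hz₀ (by rw [(mul_eq_zero.mp hz).resolve_left (exp_ne_zero _), mul_zero])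
  have hnd : 0 < γ ∨ 0 < P.natDegree := by
    rw [not_and_or] at hdeg
    exact hdeg.imp (lt_of_le_of_ne' hγ) Nat.pos_of_ne_zero
  have hstrip : ∀ v : ℂ, aeval v P = 0 → v.im ^ 2 < z.im ^ 2 + a ^ 2 := fun v hv => by
    have := sq_le_sq' (abs_le.mp (hroots v hv)).1 (abs_le.mp (hroots v hv)).2
    linarith [le_max_left (r ^ 2 - a ^ 2) 0]
  have heq := norm_sub_I_eq_of_cosShift_eq_zero hz
  rcases (show z.im ≠ 0 by rintro h; simp [h] at hfar).lt_or_gt with hlow | hup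
  · have h := norm_expQuadPoly_sub_I_lt (w := conj z) (δ := δ) hγ ha (by simpa using hlow)
      (by simpa using hstrip) hnd
    have hminus : conj z - a * I = conj (z + a * I) := by
      simp only [map_add, map_mul, conj_ofReal, conj_I, mul_neg]
      ring
    have hplus : conj z + a * I = conj (z - a * I) := by simp
    rw [hminus, hplus, norm_expQuadPoly_conj, norm_expQuadPoly_conj] at h
    linarith
  · linarith [norm_expQuadPoly_sub_I_lt (δ := δ) hγ ha hup hstrip hnd]

theorem cos_operator_strip_decrease (r a b γ δ : ℝ) (hr : 0 ≤ r) (ha : 0 < a) (hγ : 0 ≤ γ)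
    (P : Polynomial ℝ) (hP : P ≠ 0)
    (hroots : ∀ w : ℂ, Polynomial.aeval w P = 0 → |w.im| ≤ r)
    (f G : ℂ → ℂ)
    (hf : ∀ z : ℂ, f z = Complex.exp ((δ : ℂ) * z - (γ : ℂ) * z ^ 2) * Polynomial.aeval z P)
    (hG : ∀ z : ℂ, G z = Complex.exp ((b : ℂ) * Complex.I) * f (z + a * Complex.I)
        + Complex.exp (-((b : ℂ) * Complex.I)) * f (z - a * Complex.I))
    (hG0 : ∃ z : ℂ, G z ≠ 0) :
    ∀ z : ℂ, G z = 0 → z.im ^ 2 ≤ max (r ^ 2 - a ^ 2) 0 :=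
  cos_operator_strip_decrease_general r a b γ δ ha hγ P hroots f G hf hG hG0
end

section
/- Let c : ℕ → ℂ and φ : ℂ → ℂ be such that for every w ∈ ℂ, HasSum (fun n => c(n) * w^n) (φ(w)), and such that c(n) = 0 for all odd n. Then for every a ∈ ℝ and z ∈ ℂ: HasSum (fun n => c(n) * iteratedDeriv n (fun w => Complex.cos(a*w)) z) (φ(a*I) * Complex.cos(a*z)), and HasSum (fun n => c(n) * iteratedDeriv n (fun w => Complex.cosh(a*w)) z) (φ(a) * Complex.cosh(a*z)). -/
open Complex

/-! Since `cosh'' = cosh` and `cos (b w) = cosh (b I w)`, every even-order derivative of `cosh (b w)`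
multiplies it by `b ^ n`; the odd orders, where this fails, are killed by the vanishing odd
coefficients of `φ`. -/

theorem Complex.iteratedDeriv_cosh_of_even {n : ℕ} (hn : Even n) :
    iteratedDeriv n cosh = cosh := by
  obtain ⟨k, rfl⟩ := hn
  rw [← two_mul, iteratedDeriv_eq_iterate, Function.iterate_mul]
  exact Function.iterate_fixed (show deriv (deriv cosh) = cosh by rw [deriv_cosh, deriv_sinh]) k

theorem Complex.iteratedDeriv_cosh_const_mul_of_even {n : ℕ} (hn : Even n) (b : ℂ) :
    (iteratedDeriv n fun w => cosh (b * w)) = fun w => b ^ n * cosh (b * w) := by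
  rw [iteratedDeriv_comp_const_mul contDiff_cosh, iteratedDeriv_cosh_of_even hn]

theorem Complex.iteratedDeriv_cos_const_mul_of_even {n : ℕ} (hn : Even n) (b : ℂ) :
    (iteratedDeriv n fun w => cos (b * w)) = fun w => (b * I) ^ n * cos (b * w) := by
  have hcos (w : ℂ) : cos (b * w) = cosh (b * I * w) := by rw [mul_right_comm, cosh_mul_I]
  simp only [hcos]
  exact iteratedDeriv_cosh_const_mul_of_even hn _

theorem HasSum.mul_iteratedDeriv_of_even {𝕜 : Type*} [NontriviallyNormedField 𝕜] {c : ℕ → 𝕜}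
    {b s : 𝕜} (hs : HasSum (fun n => c n * b ^ n) s) (hodd : ∀ n, Odd n → c n = 0)
    {f : 𝕜 → 𝕜} {z : 𝕜} (hf : ∀ n, Even n → iteratedDeriv n f z = b ^ n * f z) :
    HasSum (fun n => c n * iteratedDeriv n f z) (s * f z) := by
  have hterm : (fun n => c n * iteratedDeriv n f z) = fun n => c n * b ^ n * f z := by
    funext n
    rcases Nat.even_or_odd n with hn | hn
    · rw [hf n hn, mul_assoc]
    · simp [hodd n hn]
  rw [hterm]
  exact hs.mul_right (f z)

theorem eigenfunction_cos_cosh (c : ℕ → ℂ) (φ : ℂ → ℂ)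
    (hφ : ∀ w : ℂ, HasSum (fun n : ℕ => c n * w ^ n) (φ w))
    (hodd : ∀ n : ℕ, Odd n → c n = 0) (a : ℝ) (z : ℂ) :
    HasSum (fun n : ℕ => c n * iteratedDeriv n (fun w => Complex.cos ((a : ℂ) * w)) z)
      (φ ((a : ℂ) * Complex.I) * Complex.cos ((a : ℂ) * z)) ∧
    HasSum (fun n : ℕ => c n * iteratedDeriv n (fun w => Complex.cosh ((a : ℂ) * w)) z)
      (φ (a : ℂ) * Complex.cosh ((a : ℂ) * z)) :=
  ⟨(hφ _).mul_iteratedDeriv_of_even hodd fun _ hn => by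
      rw [iteratedDeriv_cos_const_mul_of_even hn],
    (hφ _).mul_iteratedDeriv_of_even hodd fun _ hn => by
      rw [iteratedDeriv_cosh_const_mul_of_even hn]⟩
end

section
/- Let 0 ≤ ρ < 1, let a₀ > 0, and let g : ℝ → ℝ satisfy 1 ≤ g(a) ≤ exp((2a)^ρ) for all a ≥ a₀. Then for every r > 0 and every ε > 0 there exist a ≥ a₀ and z ∈ ℂ such that Im z > r - ε and g(a)·cos(2az) + cosh(2ar) = 0. -/
open Complex

private lemma exp_half_le_cosh (x : ℝ) : Real.exp x / 2 ≤ Real.cosh x := by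
  rw [Real.cosh_eq]
  have := (Real.exp_pos (-x)).le
  linarith

private lemma cosh_le_exp_of_nonneg {x : ℝ} (hx : 0 ≤ x) : Real.cosh x ≤ Real.exp x := by
  rw [Real.cosh_eq]
  have h : Real.exp (-x) ≤ Real.exp x := Real.exp_le_exp.2 (by linarith)
  linarith

private lemma eventually_big (ρ : ℝ) (hρ1 : ρ < 1) (c : ℝ) (hc : 0 < c) (a₀ : ℝ) :
    ∃ a : ℝ, a₀ ≤ a ∧ 0 < a ∧ (2 * a) ^ ρ + Real.log 2 < 2 * a * c := by
  have h0 : Filter.Tendsto (fun t : ℝ => t ^ (ρ - 1)) Filter.atTop (nhds 0) := by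
    have := tendsto_rpow_neg_atTop (y := 1 - ρ) (by linarith)
    simpa [neg_sub] using this
  have h1 : ∀ᶠ t : ℝ in Filter.atTop, t ^ (ρ - 1) < c / 4 :=
    h0.eventually_lt_const (by linarith)
  obtain ⟨T, hT⟩ := h1.exists_forall_of_atTop
  refine ⟨max a₀ (max 1 (max T (4 * Real.log 2 / c + 1))), le_max_left _ _, ?_, ?_⟩
  · have : (1:ℝ) ≤ max a₀ (max 1 (max T (4 * Real.log 2 / c + 1))) :=
      le_trans (le_max_left 1 _) (le_max_right _ _)
    linarith
  · set a := max a₀ (max 1 (max T (4 * Real.log 2 / c + 1))) with ha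
    have ha1 : (1:ℝ) ≤ a := le_trans (le_max_left 1 _) (le_max_right _ _)
    have haT : T ≤ a := le_trans (le_trans (le_max_left T _) (le_max_right _ _)) (le_max_right _ _)
    have haL : 4 * Real.log 2 / c + 1 ≤ a :=
      le_trans (le_trans (le_max_right T _) (le_max_right _ _)) (le_max_right _ _)
    have ht : T ≤ 2 * a := by linarith
    have hpos : (0:ℝ) < 2 * a := by linarith
    have h2 : (2 * a) ^ (ρ - 1) < c / 4 := hT _ ht
    have h3 : (2 * a) ^ ρ = (2 * a) ^ (ρ - 1) * (2 * a) := by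
      rw [← Real.rpow_add_one (ne_of_gt hpos)]; ring_nf
    have h4 : (2 * a) ^ ρ < c / 4 * (2 * a) := by
      rw [h3]; exact mul_lt_mul_of_pos_right h2 hpos
    have h5 : Real.log 2 ≤ c / 4 * a - c / 4 := by
      have : 4 * Real.log 2 / c ≤ a - 1 := by linarith
      have := (div_le_iff₀ hc).mp this
      nlinarith
    nlinarith

set_option maxHeartbeats 1000000 in
theorem not_CZSDO_order_lt_one (ρ : ℝ) (hρ0 : 0 ≤ ρ) (hρ1 : ρ < 1)
    (a₀ : ℝ) (ha₀ : 0 < a₀) (g : ℝ → ℝ)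
    (hg : ∀ a : ℝ, a₀ ≤ a → 1 ≤ g a ∧ g a ≤ Real.exp ((2 * a) ^ ρ)) :
    ∀ r > (0 : ℝ), ∀ ε > (0 : ℝ), ∃ a : ℝ, a₀ ≤ a ∧ ∃ z : ℂ,
      z.im > r - ε ∧
      (g a : ℂ) * Complex.cos (2 * (a : ℂ) * z) + Complex.cosh (2 * (a : ℂ) * (r : ℂ)) = 0 := by
  intro r hr ε hε
  -- reduce to ε' ≤ r/2
  set ε' : ℝ := min ε (r / 2) with hε'def
  have hε'pos : 0 < ε' := lt_min hε (by linarith)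
  have hε'le : ε' ≤ ε := min_le_left _ _
  have hε'r : ε' ≤ r / 2 := min_le_right _ _
  obtain ⟨a, haa₀, hapos, hbig⟩ := eventually_big ρ hρ1 ε' hε'pos a₀
  obtain ⟨hg1, hg2⟩ := hg a haa₀
  have hgpos : 0 < g a := lt_of_lt_of_le one_pos hg1
  set C : ℝ := Real.cosh (2 * a * r) / g a with hC
  -- g a ≤ cosh (2ar)
  have e2 : Real.exp (Real.log 2) = 2 := Real.exp_log (by norm_num)
  have hkey : Real.exp ((2 * a) ^ ρ) * 2 ≤ Real.exp (2 * a * ε') := by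
    calc Real.exp ((2 * a) ^ ρ) * 2 = Real.exp ((2 * a) ^ ρ + Real.log 2) := by
          rw [Real.exp_add, e2]
      _ ≤ Real.exp (2 * a * ε') := Real.exp_le_exp.2 hbig.le
  have hgcosh : g a ≤ Real.cosh (2 * a * r) := by
    have h1 : Real.exp (2 * a * ε') ≤ Real.exp (2 * a * r) := by
      apply Real.exp_le_exp.2; nlinarith
    have h2 := exp_half_le_cosh (2 * a * r)
    nlinarith [Real.exp_pos ((2*a)^ρ)]
  have hC1 : 1 ≤ C := (one_le_div hgpos).2 hgcosh
  have hCle : C ≤ Real.cosh (2 * a * r) := by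
    rw [hC, div_le_iff₀ hgpos]; nlinarith [Real.cosh_pos (x := 2 * a * r)]
  -- IVT for y
  have hcont : ContinuousOn (fun y : ℝ => Real.cosh (2 * a * y)) (Set.Icc 0 r) :=
    (Real.continuous_cosh.comp (continuous_const.mul continuous_id)).continuousOn
  have hIVT := intermediate_value_Icc (le_of_lt hr) hcont
  have hCmem : C ∈ Set.Icc (Real.cosh (2 * a * 0)) (Real.cosh (2 * a * r)) := by
    constructor
    · simpa using hC1
    · exact hCle
  obtain ⟨y, hy, hyC⟩ := hIVT hCmem
  simp only at hyC
  have hy0 : 0 ≤ y := hy.1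
  -- strict bound: cosh (2a(r-ε')) < C
  have hstrict : Real.cosh (2 * a * (r - ε')) < C := by
    have hnn : 0 ≤ 2 * a * (r - ε') := by nlinarith
    have h1 : Real.cosh (2 * a * (r - ε')) ≤ Real.exp (2 * a * (r - ε')) :=
      cosh_le_exp_of_nonneg hnn
    have h2 : Real.exp (2 * a * (r - ε')) * (g a) < Real.exp (2 * a * r) / 2 := by
      have h3 : Real.exp (2 * a * (r - ε')) * Real.exp ((2 * a) ^ ρ) * 2
          < Real.exp (2 * a * r) := by
        rw [← Real.exp_add]
        calc Real.exp (2 * a * (r - ε') + (2 * a) ^ ρ) * 2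
            = Real.exp (2 * a * (r - ε') + (2 * a) ^ ρ + Real.log 2) := by
              rw [Real.exp_add (2 * a * (r - ε') + (2 * a) ^ ρ) (Real.log 2), e2]
          _ < Real.exp (2 * a * r) := by
              apply Real.exp_lt_exp.2; nlinarith
      nlinarith [Real.exp_pos (2 * a * (r - ε')), Real.exp_pos ((2*a)^ρ)]
    have h4 : Real.exp (2 * a * r) / 2 ≤ Real.cosh (2 * a * r) := exp_half_le_cosh _
    rw [hC, lt_div_iff₀ hgpos]
    nlinarith [Real.exp_pos (2 * a * (r - ε'))]
  have hylt : r - ε' < y := by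
    rw [← hyC] at hstrict
    have habs := Real.cosh_lt_cosh.1 hstrict
    have : 2 * a * (r - ε') < 2 * a * y := by
      calc 2 * a * (r - ε') ≤ |2 * a * (r - ε')| := le_abs_self _
        _ < |2 * a * y| := habs
        _ = 2 * a * y := abs_of_nonneg (by nlinarith)
    nlinarith
  -- the point z
  refine ⟨a, haa₀, (Real.pi / (2 * a) : ℝ) + (y : ℝ) * I, ?_, ?_⟩
  · have him : (((Real.pi / (2 * a) : ℝ) : ℂ) + (y : ℝ) * I).im = y := by
      simp only [Complex.add_im, Complex.ofReal_im, Complex.mul_im, Complex.ofReal_re,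
        Complex.I_im, Complex.I_re, mul_zero, mul_one, zero_add, add_zero]
    rw [him]; linarith
  · have hane : (a : ℂ) ≠ 0 := Complex.ofReal_ne_zero.2 (ne_of_gt hapos)
    have hz : 2 * (a : ℂ) * ((Real.pi / (2 * a) : ℝ) + (y : ℝ) * I)
        = (Real.pi : ℂ) + (2 * a * y : ℝ) * I := by
      push_cast
      field_simp
    rw [hz]
    rw [Complex.cos_add, Complex.cos_pi, Complex.sin_pi, Complex.cos_mul_I]
    have hcr : 2 * (a : ℂ) * (r : ℂ) = ((2 * a * r : ℝ) : ℂ) := by push_cast; ring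
    rw [hcr, ← Complex.ofReal_cosh, ← Complex.ofReal_cosh]
    have : g a * Real.cosh (2 * a * y) = Real.cosh (2 * a * r) := by
      rw [hyC, hC]; field_simp
    push_cast [← this]
    ring
end

section
/- Let g : ℝ → ℝ and a₀ > 0 satisfy 1 ≤ g(a) for all a ≥ a₀, and suppose that for every ε > 0 there exists A ≥ a₀ such that g(a) ≤ exp(2εa) for all a ≥ A. Then for every r > 0 and every ε > 0 there exist a ≥ a₀ and z ∈ ℂ such that Im z > r - ε and g(a)·cos(2az) + cosh(2ar) = 0. -/
open Complex

set_option maxHeartbeats 1600000 in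
theorem not_CZSDO_minimal_type (a₀ : ℝ) (ha₀ : 0 < a₀) (g : ℝ → ℝ)
    (hg1 : ∀ a : ℝ, a₀ ≤ a → 1 ≤ g a)
    (hg2 : ∀ ε > (0 : ℝ), ∃ A : ℝ, a₀ ≤ A ∧ ∀ a : ℝ, A ≤ a → g a ≤ Real.exp (2 * ε * a)) :
    ∀ r > (0 : ℝ), ∀ ε > (0 : ℝ), ∃ a : ℝ, a₀ ≤ a ∧ ∃ z : ℂ,
      z.im > r - ε ∧
      (g a : ℂ) * Complex.cos (2 * (a : ℂ) * z) + Complex.cosh (2 * (a : ℂ) * (r : ℂ)) = 0 := by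
  intro r hr ε hε
  set ε' : ℝ := min ε r / 2 with hε'def
  have hε' : 0 < ε' := by
    have : 0 < min ε r := lt_min hε hr
    positivity
  have hε'ε : 2 * ε' ≤ ε := by
    have := min_le_left ε r; simp only [hε'def]; linarith
  have hε'r : 2 * ε' ≤ r := by
    have := min_le_right ε r; simp only [hε'def]; linarith
  obtain ⟨A, hAa₀, hA⟩ := hg2 ε' hε'
  set a : ℝ := max A (Real.log 2 / ε' + 1) with hadef
  have haA : A ≤ a := le_max_left _ _
  have ha₀a : a₀ ≤ a := hAa₀.trans haA
  have ha0 : 0 < a := lt_of_lt_of_le ha₀ ha₀a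
  have hln2 : 0 < Real.log 2 := Real.log_pos (by norm_num)
  have hlog : Real.log 2 / ε' + 1 ≤ a := le_max_right _ _
  have hK : Real.log 2 < a * ε' := by
    have h1 : Real.log 2 / ε' < a := by linarith
    calc Real.log 2 = Real.log 2 / ε' * ε' := by field_simp
    _ < a * ε' := by exact mul_lt_mul_of_pos_right h1 hε'
  have hg : 1 ≤ g a := hg1 a ha₀a
  have hgpos : 0 < g a := lt_of_lt_of_le one_pos hg
  have hge : g a ≤ Real.exp (2 * ε' * a) := hA a haA
  -- exp (2ε'a) * 2 ≤ exp (2ar)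
  have hexp2 : Real.exp (2 * ε' * a) * 2 ≤ Real.exp (2 * a * r) := by
    have h1 : Real.exp (2 * ε' * a) * 2 ≤ Real.exp (2 * ε' * a) * Real.exp (Real.log 2 + a * ε') := by
      have : (2 : ℝ) ≤ Real.exp (Real.log 2 + a * ε') := by
        rw [Real.exp_add, Real.exp_log (by norm_num : (0:ℝ) < 2)]
        nlinarith [Real.one_le_exp (le_of_lt (by positivity : (0:ℝ) < a * ε'))]
      nlinarith [Real.exp_pos (2 * ε' * a)]
    have h2 : Real.exp (2 * ε' * a) * Real.exp (Real.log 2 + a * ε') ≤ Real.exp (2 * a * r) := by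
      rw [← Real.exp_add]
      apply Real.exp_le_exp.2
      nlinarith
    linarith
  have hcosh_ge : Real.exp (2 * a * r) / 2 ≤ Real.cosh (2 * a * r) := by
    rw [Real.cosh_eq]
    have := Real.exp_pos (-(2 * a * r))
    linarith
  have hgc : g a ≤ Real.cosh (2 * a * r) := by linarith
  set c : ℝ := Real.cosh (2 * a * r) / g a with hcdef
  have hcoshpos : 0 < Real.cosh (2 * a * r) := Real.cosh_pos _
  have hc1 : 1 ≤ c := (one_le_div hgpos).2 hgc
  have hcr : c ≤ Real.cosh (2 * a * r) := by
    rw [hcdef]; exact div_le_self hcoshpos.le hg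
  -- IVT to find y ∈ [0, r] with cosh (2 a y) = c
  have hcont : ContinuousOn (fun t : ℝ => Real.cosh (2 * a * t)) (Set.Icc 0 r) :=
    (Real.continuous_cosh.comp (continuous_const.mul continuous_id)).continuousOn
  have hmem : c ∈ Set.Icc (Real.cosh (2 * a * 0)) (Real.cosh (2 * a * r)) := by
    constructor
    · simpa using hc1
    · exact hcr
  obtain ⟨y, hyIcc, hyc'⟩ := intermediate_value_Icc hr.le hcont hmem
  obtain ⟨hy0, hyr⟩ := hyIcc
  have hyc : Real.cosh (2 * a * y) = c := hyc'
  -- the key strict inequality: cosh (2 a m) < c for m = max (r - ε) 0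
  set m : ℝ := max (r - ε) 0 with hmdef
  have hm0 : 0 ≤ m := le_max_right _ _
  have hmle : m ≤ r - 2 * ε' := by
    apply max_le <;> linarith
  have hstrict : Real.cosh (2 * a * m) < c := by
    have h1 : Real.cosh (2 * a * m) ≤ Real.exp (2 * a * m) := by
      rw [Real.cosh_eq]
      have h2 : Real.exp (-(2 * a * m)) ≤ Real.exp (2 * a * m) :=
        Real.exp_le_exp.2 (by nlinarith)
      linarith
    have h2 : Real.exp (2 * a * m) * 2 < Real.exp (2 * a * (r - ε')) := by
      have : Real.exp (2 * a * m) * 2 ≤ Real.exp (2 * a * m) * Real.exp (Real.log 2 + a * ε') := by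
        have h3 : (2 : ℝ) ≤ Real.exp (Real.log 2 + a * ε') := by
          rw [Real.exp_add, Real.exp_log (by norm_num : (0:ℝ) < 2)]
          nlinarith [Real.one_le_exp (le_of_lt (by positivity : (0:ℝ) < a * ε'))]
        nlinarith [Real.exp_pos (2 * a * m)]
      have h4 : Real.exp (2 * a * m) * Real.exp (Real.log 2 + a * ε') < Real.exp (2 * a * (r - ε')) := by
        rw [← Real.exp_add]
        apply Real.exp_lt_exp.2
        have hmm : 2 * a * m ≤ 2 * a * (r - 2 * ε') :=
          mul_le_mul_of_nonneg_left hmle (by positivity)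
        have hring : 2 * a * (r - 2 * ε') + a * ε' + a * ε' = 2 * a * (r - ε') := by ring
        linarith
      linarith
    have h3 : Real.exp (2 * a * (r - ε')) * Real.exp (2 * ε' * a) = Real.exp (2 * a * r) := by
      rw [← Real.exp_add]; ring_nf
    have h5 : Real.exp (2 * a * (r - ε')) / 2 ≤ c := by
      rw [hcdef, le_div_iff₀ hgpos]
      have hEpos : 0 < Real.exp (2 * ε' * a) := Real.exp_pos _
      have : Real.exp (2 * a * (r - ε')) / 2 * g a ≤ Real.exp (2 * a * (r - ε')) / 2 * Real.exp (2 * ε' * a) := by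
        apply mul_le_mul_of_nonneg_left hge (by positivity)
      calc Real.exp (2 * a * (r - ε')) / 2 * g a
          ≤ Real.exp (2 * a * (r - ε')) / 2 * Real.exp (2 * ε' * a) := this
        _ = Real.exp (2 * a * r) / 2 := by rw [← h3]; ring
        _ ≤ Real.cosh (2 * a * r) := hcosh_ge
    linarith
  -- strict inequality gives y > m ≥ r - ε
  have hym : m < y := by
    by_contra h
    push_neg at h
    have : Real.cosh (2 * a * y) ≤ Real.cosh (2 * a * m) := by
      apply Real.cosh_le_cosh.2
      rw [_root_.abs_of_nonneg (by positivity), _root_.abs_of_nonneg (by positivity)]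
      nlinarith
    rw [hyc] at this
    linarith
  have hyre : r - ε < y := lt_of_le_of_lt (le_max_left _ _) hym
  refine ⟨a, ha₀a, (Real.pi / (2 * a) : ℝ) + (y : ℝ) * I, ?_, ?_⟩
  · have him : ((((Real.pi / (2 * a) : ℝ)) : ℂ) + (y : ℝ) * I).im = y := by
      rw [Complex.add_im, Complex.ofReal_im, Complex.mul_im]
      simp
    rw [him]
    exact hyre
  · have h2az : 2 * (a : ℂ) * ((Real.pi / (2 * a) : ℝ) + (y : ℝ) * I)
        = (Real.pi : ℝ) + ((2 * a * y : ℝ) : ℂ) * I := by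
      have ha0' : (a : ℂ) ≠ 0 := by exact_mod_cast ha0.ne'
      push_cast
      field_simp
    rw [h2az, Complex.cos_add, Complex.cos_pi, Complex.sin_pi]
    have hcos : Complex.cos (((2 * a * y : ℝ) : ℂ) * I) = ((Real.cosh (2 * a * y) : ℝ) : ℂ) := by
      rw [Complex.cos_mul_I, Complex.ofReal_cosh]
    have hcosh : Complex.cosh (2 * (a : ℂ) * (r : ℂ)) = ((Real.cosh (2 * a * r) : ℝ) : ℂ) := by
      rw [Complex.ofReal_cosh]; push_cast; ring_nf
    rw [hcos, hcosh]
    have hreal : g a * Real.cosh (2 * a * y) = Real.cosh (2 * a * r) := by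
      rw [hyc, hcdef]
      field_simp
    push_cast [← hreal]
    ring
end

section
/- Let m ≥ 1 be an integer, let d : ℕ → ℂ and φ₁ : ℂ → ℂ be such that for every w ∈ ℂ, HasSum (fun n => d(n) * w^n) (φ₁(w)), and such that d(n) = 0 for all odd n. Let a > 0 and r > 0 be real, and define g_a : ℂ → ℂ by g_a(z) = cos²(a(z - ir))·cos²(a(z + ir)). Then for every z ∈ ℂ, HasSum (fun n => d(n) * iteratedDeriv (2m + n) g_a z) ((-1)^m · 2^(2m-1) · a^(2m) · (4^(m-1)·φ₁(4a*I)·Complex.cos(4*a*z) + Complex.cosh(2*a*r)·φ₁(2a*I)·Complex.cos(2*a*z))). -/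
open Complex

private lemma hdExp (E c w : ℂ) :
    HasDerivAt (fun w : ℂ => E * Complex.exp (c * w)) (E * c * Complex.exp (c * w)) w := by
  have h := (((hasDerivAt_id w).const_mul c).cexp).const_mul E
  have he : E * c * Complex.exp (c * w) = E * (Complex.exp (c * w) * (c * 1)) := by ring
  rw [he]; exact h

private lemma iterFour (k : ℕ) (c₁ c₂ c₃ c₄ : ℂ) : ∀ (A B C D z : ℂ),
    iteratedDeriv k (fun w => A * Complex.exp (c₁ * w) + B * Complex.exp (c₂ * w)
        + C * Complex.exp (c₃ * w) + D * Complex.exp (c₄ * w)) z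
      = A * c₁ ^ k * Complex.exp (c₁ * z) + B * c₂ ^ k * Complex.exp (c₂ * z)
        + C * c₃ ^ k * Complex.exp (c₃ * z) + D * c₄ ^ k * Complex.exp (c₄ * z) := by
  induction k with
  | zero => intro A B C D z; simp
  | succ n ih =>
    intro A B C D z
    rw [iteratedDeriv_succ']
    have hderiv : deriv (fun w : ℂ => A * Complex.exp (c₁ * w) + B * Complex.exp (c₂ * w)
        + C * Complex.exp (c₃ * w) + D * Complex.exp (c₄ * w))
        = fun w => (A * c₁) * Complex.exp (c₁ * w) + (B * c₂) * Complex.exp (c₂ * w)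
          + (C * c₃) * Complex.exp (c₃ * w) + (D * c₄) * Complex.exp (c₄ * w) :=
      funext fun w =>
        ((((hdExp A c₁ w).add (hdExp B c₂ w)).add (hdExp C c₃ w)).add (hdExp D c₄ w)).deriv
    rw [hderiv, ih (A * c₁) (B * c₂) (C * c₃) (D * c₄) z]
    ring

private lemma iterFive (k : ℕ) (hk : 0 < k) (C₀ A B C D c₁ c₂ c₃ c₄ z : ℂ) :
    iteratedDeriv k (fun w => C₀ + (A * Complex.exp (c₁ * w) + B * Complex.exp (c₂ * w)
        + C * Complex.exp (c₃ * w) + D * Complex.exp (c₄ * w))) z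
      = A * c₁ ^ k * Complex.exp (c₁ * z) + B * c₂ ^ k * Complex.exp (c₂ * z)
        + C * c₃ ^ k * Complex.exp (c₃ * z) + D * c₄ ^ k * Complex.exp (c₄ * z) := by
  obtain ⟨n, rfl⟩ := Nat.exists_eq_succ_of_ne_zero hk.ne'
  rw [iteratedDeriv_succ']
  have hderiv : deriv (fun w : ℂ => C₀ + (A * Complex.exp (c₁ * w) + B * Complex.exp (c₂ * w)
      + C * Complex.exp (c₃ * w) + D * Complex.exp (c₄ * w)))
      = fun w => (A * c₁) * Complex.exp (c₁ * w) + (B * c₂) * Complex.exp (c₂ * w)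
        + (C * c₃) * Complex.exp (c₃ * w) + (D * c₄) * Complex.exp (c₄ * w) :=
    funext fun w =>
      (((((hdExp A c₁ w).add (hdExp B c₂ w)).add (hdExp C c₃ w)).add
        (hdExp D c₄ w)).const_add C₀).deriv
  rw [hderiv, iterFour n c₁ c₂ c₃ c₄ (A * c₁) (B * c₂) (C * c₃) (D * c₄) z]
  simp only [Nat.succ_eq_add_one, pow_succ]
  ring

private lemma trigkey (A B : ℂ) : Complex.cos A ^ 2 * Complex.cos B ^ 2
    = 1 / 4 + Complex.cos (2 * (A - B)) / 8 + Complex.cos (2 * (A + B)) / 8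
      + Complex.cos (A + B) * Complex.cos (A - B) / 2 := by
  have e1 : Complex.cos (2 * A)
      = Complex.cos (A + B) * Complex.cos (A - B)
        - Complex.sin (A + B) * Complex.sin (A - B) := by
    rw [← Complex.cos_add, show A + B + (A - B) = 2 * A by ring]
  have e2 : Complex.cos (2 * B)
      = Complex.cos (A + B) * Complex.cos (A - B)
        + Complex.sin (A + B) * Complex.sin (A - B) := by
    rw [← Complex.cos_sub, show A + B - (A - B) = 2 * B by ring]
  have e3 : Complex.cos (2 * A) * Complex.cos (2 * B)
      = (Complex.cos (2 * (A - B)) + Complex.cos (2 * (A + B))) / 2 := by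
    rw [show 2 * (A - B) = 2 * A - 2 * B by ring, show 2 * (A + B) = 2 * A + 2 * B by ring,
      Complex.cos_sub, Complex.cos_add]
    ring
  rw [Complex.cos_sq, Complex.cos_sq]
  linear_combination (1 / 4 : ℂ) * e1 + (1 / 4 : ℂ) * e2 + (1 / 4 : ℂ) * e3

private lemma key (a r z : ℂ) :
    Complex.cos (a * (z - Complex.I * r)) ^ 2 * Complex.cos (a * (z + Complex.I * r)) ^ 2 =
      (1 / 4 + Complex.cosh (4 * a * r) / 8)
        + ((1 / 16 : ℂ) * Complex.exp (4 * a * Complex.I * z)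
          + (1 / 16 : ℂ) * Complex.exp (-(4 * a * Complex.I) * z)
          + Complex.cosh (2 * a * r) / 4 * Complex.exp (2 * a * Complex.I * z)
          + Complex.cosh (2 * a * r) / 4 * Complex.exp (-(2 * a * Complex.I) * z)) := by
  rw [trigkey,
    show 2 * (a * (z - Complex.I * r) - a * (z + Complex.I * r)) = -(4 * a * r) * Complex.I by
      ring,
    show 2 * (a * (z - Complex.I * r) + a * (z + Complex.I * r)) = 4 * a * z by ring,
    show a * (z - Complex.I * r) + a * (z + Complex.I * r) = 2 * a * z by ring,
    show a * (z - Complex.I * r) - a * (z + Complex.I * r) = -(2 * a * r) * Complex.I by ring,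
    Complex.cos_mul_I, Complex.cos_mul_I, Complex.cosh_neg, Complex.cosh_neg]
  simp only [Complex.cos]
  rw [show 4 * a * z * Complex.I = 4 * a * Complex.I * z by ring,
      show -(4 * a * z) * Complex.I = -(4 * a * Complex.I) * z by ring,
      show 2 * a * z * Complex.I = 2 * a * Complex.I * z by ring,
      show -(2 * a * z) * Complex.I = -(2 * a * Complex.I) * z by ring]
  ring

private lemma pow2I (x : ℂ) (k : ℕ) :
    (x * Complex.I) ^ (2 * k) = (-1) ^ k * x ^ (2 * k) := by
  rw [mul_pow, pow_mul, pow_mul, Complex.I_sq, ← pow_mul]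
  ring

theorem operator_on_double_zero_extremal (m : ℕ) (hm : 1 ≤ m)
    (d : ℕ → ℂ) (φ₁ : ℂ → ℂ)
    (hφ₁ : ∀ w : ℂ, HasSum (fun n : ℕ => d n * w ^ n) (φ₁ w))
    (hodd : ∀ n : ℕ, Odd n → d n = 0) (a r : ℝ) (ha : 0 < a) (hr : 0 < r)
    (g_a : ℂ → ℂ)
    (hg_a : ∀ z : ℂ, g_a z = Complex.cos ((a : ℂ) * (z - Complex.I * (r : ℂ))) ^ 2
        * Complex.cos ((a : ℂ) * (z + Complex.I * (r : ℂ))) ^ 2) (z : ℂ) :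
    HasSum (fun n : ℕ => d n * iteratedDeriv (2 * m + n) g_a z)
      ((-1 : ℂ) ^ m * 2 ^ (2 * m - 1) * (a : ℂ) ^ (2 * m) *
        ((4 : ℂ) ^ (m - 1) * φ₁ (4 * (a : ℂ) * Complex.I) * Complex.cos (4 * (a : ℂ) * z)
          + Complex.cosh (2 * (a : ℂ) * (r : ℂ)) * φ₁ (2 * (a : ℂ) * Complex.I)
            * Complex.cos (2 * (a : ℂ) * z))) := by
  obtain ⟨m', rfl⟩ : ∃ m', m = m' + 1 := ⟨m - 1, by omega⟩
  have hgfun : g_a = fun w => (1 / 4 + Complex.cosh (4 * (a : ℂ) * (r : ℂ)) / 8)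
      + ((1 / 16 : ℂ) * Complex.exp (4 * (a : ℂ) * Complex.I * w)
        + (1 / 16 : ℂ) * Complex.exp (-(4 * (a : ℂ) * Complex.I) * w)
        + Complex.cosh (2 * (a : ℂ) * (r : ℂ)) / 4 * Complex.exp (2 * (a : ℂ) * Complex.I * w)
        + Complex.cosh (2 * (a : ℂ) * (r : ℂ)) / 4
          * Complex.exp (-(2 * (a : ℂ) * Complex.I) * w)) := by
    funext w; rw [hg_a w]; exact key (a : ℂ) (r : ℂ) w
  have hiter : ∀ n : ℕ, iteratedDeriv (2 * (m' + 1) + n) g_a z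
      = (1 / 16 : ℂ) * (4 * (a : ℂ) * Complex.I) ^ (2 * (m' + 1) + n)
          * Complex.exp (4 * (a : ℂ) * Complex.I * z)
        + (1 / 16 : ℂ) * (-(4 * (a : ℂ) * Complex.I)) ^ (2 * (m' + 1) + n)
          * Complex.exp (-(4 * (a : ℂ) * Complex.I) * z)
        + Complex.cosh (2 * (a : ℂ) * (r : ℂ)) / 4
          * (2 * (a : ℂ) * Complex.I) ^ (2 * (m' + 1) + n)
          * Complex.exp (2 * (a : ℂ) * Complex.I * z)
        + Complex.cosh (2 * (a : ℂ) * (r : ℂ)) / 4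
          * (-(2 * (a : ℂ) * Complex.I)) ^ (2 * (m' + 1) + n)
          * Complex.exp (-(2 * (a : ℂ) * Complex.I) * z) := by
    intro n
    rw [hgfun]
    exact iterFive _ (by omega) _ _ _ _ _ _ _ _ _ z
  have h1 := (hφ₁ (4 * (a : ℂ) * Complex.I)).mul_left
    ((1 / 8 : ℂ) * (4 * (a : ℂ) * Complex.I) ^ (2 * (m' + 1)) * Complex.cos (4 * (a : ℂ) * z))
  have h2 := (hφ₁ (2 * (a : ℂ) * Complex.I)).mul_left
    ((1 / 2 : ℂ) * Complex.cosh (2 * (a : ℂ) * (r : ℂ))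
      * (2 * (a : ℂ) * Complex.I) ^ (2 * (m' + 1)) * Complex.cos (2 * (a : ℂ) * z))
  have hfun_eq : (fun n : ℕ => d n * iteratedDeriv (2 * (m' + 1) + n) g_a z)
      = fun n : ℕ =>
        (1 / 8 : ℂ) * (4 * (a : ℂ) * Complex.I) ^ (2 * (m' + 1)) * Complex.cos (4 * (a : ℂ) * z)
          * (d n * (4 * (a : ℂ) * Complex.I) ^ n)
        + (1 / 2 : ℂ) * Complex.cosh (2 * (a : ℂ) * (r : ℂ))
          * (2 * (a : ℂ) * Complex.I) ^ (2 * (m' + 1)) * Complex.cos (2 * (a : ℂ) * z)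
          * (d n * (2 * (a : ℂ) * Complex.I) ^ n) := by
    funext n
    rcases Nat.even_or_odd n with he | ho
    · obtain ⟨j, rfl⟩ := he
      rw [hiter]
      have hev : Even (2 * (m' + 1) + (j + j)) := ⟨(m' + 1) + j, by ring⟩
      rw [hev.neg_pow, hev.neg_pow, pow_add, pow_add]
      simp only [Complex.cos]
      rw [show 4 * (a : ℂ) * z * Complex.I = 4 * (a : ℂ) * Complex.I * z by ring,
          show -(4 * (a : ℂ) * z) * Complex.I = -(4 * (a : ℂ) * Complex.I) * z by ring,
          show 2 * (a : ℂ) * z * Complex.I = 2 * (a : ℂ) * Complex.I * z by ring,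
          show -(2 * (a : ℂ) * z) * Complex.I = -(2 * (a : ℂ) * Complex.I) * z by ring]
      ring
    · rw [hodd n ho]; ring
  have num1 : (4 : ℂ) ^ (2 * (m' + 1)) = 2 ^ (2 * (m' + 1) - 1) * 4 ^ ((m' + 1) - 1) * 8 := by
    rw [show (4 : ℂ) = 2 ^ 2 by norm_num, show (8 : ℂ) = 2 ^ 3 by norm_num,
      ← pow_mul, ← pow_mul, ← pow_add, ← pow_add]
    congr 1 <;> omega
  have num2 : (2 : ℂ) ^ (2 * (m' + 1)) = 2 ^ (2 * (m' + 1) - 1) * 2 := by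
    rw [← pow_succ]; congr 1 <;> omega
  have hval : (1 / 8 : ℂ) * (4 * (a : ℂ) * Complex.I) ^ (2 * (m' + 1))
        * Complex.cos (4 * (a : ℂ) * z) * φ₁ (4 * (a : ℂ) * Complex.I)
      + (1 / 2 : ℂ) * Complex.cosh (2 * (a : ℂ) * (r : ℂ))
        * (2 * (a : ℂ) * Complex.I) ^ (2 * (m' + 1)) * Complex.cos (2 * (a : ℂ) * z)
        * φ₁ (2 * (a : ℂ) * Complex.I)
      = (-1 : ℂ) ^ (m' + 1) * 2 ^ (2 * (m' + 1) - 1) * (a : ℂ) ^ (2 * (m' + 1)) *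
        ((4 : ℂ) ^ (m' + 1 - 1) * φ₁ (4 * (a : ℂ) * Complex.I) * Complex.cos (4 * (a : ℂ) * z)
          + Complex.cosh (2 * (a : ℂ) * (r : ℂ)) * φ₁ (2 * (a : ℂ) * Complex.I)
            * Complex.cos (2 * (a : ℂ) * z)) := by
    rw [pow2I (4 * (a : ℂ)) (m' + 1), pow2I (2 * (a : ℂ)) (m' + 1), mul_pow, mul_pow, num1, num2]
    ring
  rw [hfun_eq, ← hval]
  exact h1.add h2
end

section
/- Let m ≥ 1 be an integer, let a > 0, and let A, B be positive real numbers with B > 2^(2m-1)·A. Then the function z ↦ 2^(2m-2)·A·cos(4az) + B·cos(2az) (from ℂ to ℂ) has a zero z₀ with Im z₀ ≥ arcosh(B/(2^(2m-1)·A))/(2a). -/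
open Complex

/-- The inverse hyperbolic cosine (for `x ≥ 1`). -/
noncomputable def arcosh (x : ℝ) : ℝ := Real.log (x + Real.sqrt (x ^ 2 - 1))

lemma cosh_arcosh' {x : ℝ} (hx : 1 ≤ x) : Real.cosh (arcosh x) = x := by
  have h1 : (0:ℝ) ≤ x ^ 2 - 1 := by nlinarith
  have hs : Real.sqrt (x ^ 2 - 1) ^ 2 = x ^ 2 - 1 := Real.sq_sqrt h1
  have hs0 : 0 ≤ Real.sqrt (x ^ 2 - 1) := Real.sqrt_nonneg _
  have hpos : 0 < x + Real.sqrt (x ^ 2 - 1) := by nlinarith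
  rw [arcosh, Real.cosh_log hpos]
  have hinv : (x + Real.sqrt (x ^ 2 - 1))⁻¹ = x - Real.sqrt (x ^ 2 - 1) := by
    rw [inv_eq_iff_eq_inv, eq_comm, inv_eq_iff_eq_inv, eq_comm]
    · field_simp
      nlinarith
  rw [hinv]; ring

lemma arcosh_le_arcosh {r x : ℝ} (hr : 1 ≤ r) (hrx : r ≤ x) :
    arcosh r ≤ arcosh x := by
  have h1 : (0:ℝ) ≤ r ^ 2 - 1 := by nlinarith
  have hpos : 0 < r + Real.sqrt (r ^ 2 - 1) := by positivity
  apply Real.log_le_log hpos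
  have : Real.sqrt (r ^ 2 - 1) ≤ Real.sqrt (x ^ 2 - 1) := by
    apply Real.sqrt_le_sqrt; nlinarith
  linarith

set_option maxHeartbeats 1000000 in
theorem zero_far_from_real_axis (m : ℕ) (hm : 1 ≤ m) (a : ℝ) (ha : 0 < a)
    (A B : ℝ) (hA : 0 < A) (hB : 0 < B) (hAB : B > 2 ^ (2 * m - 1) * A) :
    ∃ z₀ : ℂ,
      (2 : ℂ) ^ (2 * m - 2) * (A : ℂ) * Complex.cos (4 * (a : ℂ) * z₀)
        + (B : ℂ) * Complex.cos (2 * (a : ℂ) * z₀) = 0 ∧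
      z₀.im ≥ arcosh (B / (2 ^ (2 * m - 1) * A)) / (2 * a) := by
  set P : ℝ := 2 ^ (2 * m - 1) * A with hP
  have hPpos : 0 < P := by positivity
  set s : ℝ := Real.sqrt (B ^ 2 + 2 * P ^ 2) with hs
  have hs2 : s ^ 2 = B ^ 2 + 2 * P ^ 2 := Real.sq_sqrt (by positivity)
  have hsB : B ≤ s := by
    rw [hs]
    nlinarith [Real.sq_sqrt (show (0:ℝ) ≤ B ^ 2 + 2 * P ^ 2 by positivity),
      Real.sqrt_nonneg (B ^ 2 + 2 * P ^ 2)]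
  set x : ℝ := (B + s) / (2 * P) with hx
  have hrx : B / P ≤ x := by
    rw [hx, div_le_div_iff₀ hPpos (by positivity)]
    nlinarith
  have hr1 : 1 < B / P := (one_lt_div hPpos).2 hAB
  have hx1 : 1 ≤ x := le_trans hr1.le hrx
  -- quadratic identity
  have hquad : P * x ^ 2 - B * x - P / 2 = 0 := by
    rw [hx]; field_simp; nlinarith
  set t : ℝ := arcosh x with ht
  have hcosh : Real.cosh t = x := cosh_arcosh' hx1
  refine ⟨(Real.pi + t * Complex.I) / (2 * a), ?_, ?_⟩
  · have ha' : (a : ℂ) ≠ 0 := Complex.ofReal_ne_zero.2 ha.ne'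
    have h2 : 2 * (a : ℂ) * ((Real.pi + t * Complex.I) / (2 * a)) = Real.pi + t * Complex.I := by
      field_simp
    have h4 : 4 * (a : ℂ) * ((Real.pi + t * Complex.I) / (2 * a)) = 2 * Real.pi + (2 * t) * Complex.I := by
      field_simp; ring
    rw [h2, h4]
    have e2 : Complex.cos ((Real.pi : ℂ) + t * Complex.I) = -(Real.cosh t : ℂ) := by
      rw [Complex.cos_add]
      simp [Complex.cos_mul_I, Complex.ofReal_cosh]
    have e4 : Complex.cos (2 * (Real.pi : ℂ) + ((2 * t : ℝ) : ℂ) * Complex.I) = (Real.cosh (2 * t) : ℂ) := by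
      rw [Complex.cos_add]
      simp [Complex.cos_mul_I, Complex.ofReal_cosh, Complex.cos_two_pi, Complex.sin_two_pi]
    have e4' : Complex.cos (2 * (Real.pi : ℂ) + (2 * t) * Complex.I) = (Real.cosh (2 * t) : ℂ) := by
      rw [← e4]; push_cast; ring_nf
    rw [e2, e4']
    have hP2 : (2:ℝ) ^ (2 * m - 1) = 2 * 2 ^ (2 * m - 2) := by
      have : 2 * m - 1 = (2 * m - 2) + 1 := by omega
      rw [this, pow_succ]; ring
    have hcosh2 : Real.cosh (2 * t) = 2 * x ^ 2 - 1 := by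
      have := Real.cosh_two_mul t
      have hsq := Real.cosh_sq t
      nlinarith
    have hreal : 2 ^ (2 * m - 2) * A * Real.cosh (2 * t) + B * (-(Real.cosh t)) = 0 := by
      rw [hcosh2, hcosh]
      have : P = 2 * (2 ^ (2 * m - 2) * A) := by rw [hP, hP2]; ring
      nlinarith
    exact_mod_cast hreal
  · have him : ((Real.pi + t * Complex.I) / (2 * a) : ℂ).im = t / (2 * a) := by
      rw [Complex.div_im]
      simp [Complex.normSq_ofReal]
      field_simp
    rw [him, ge_iff_le]
    have hle := arcosh_le_arcosh hr1.le hrx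
    gcongr
end

section
/- Let p be a polynomial with real coefficients of degree at least 1 such that every complex root of p is real. If x ∈ ℝ and p(x) ≠ 0, then p'(x)² - p(x)·p''(x) > 0. -/
open Polynomial

lemma laguerre_aux : ∀ (n : ℕ) (p : Polynomial ℝ), p.natDegree = n →
    (∀ w : ℂ, Polynomial.aeval w p = 0 → w.im = 0) →
    ∀ x : ℝ, p.eval x ≠ 0 →
    0 ≤ (p.derivative.eval x) ^ 2 - p.eval x * (p.derivative.derivative.eval x) ∧
    (1 ≤ n → 0 < (p.derivative.eval x) ^ 2 -
      p.eval x * (p.derivative.derivative.eval x)) := by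
  intro n
  induction n with
  | zero =>
    intro p hdeg hroots x hx
    obtain ⟨a, rfl⟩ := Polynomial.natDegree_eq_zero.mp hdeg
    simp
  | succ n ih =>
    intro p hdeg hroots x hx
    have hp0 : p ≠ 0 := fun h => hx (by simp [h])
    have hmap0 : p.map (algebraMap ℝ ℂ) ≠ 0 := by
      simpa using hp0
    have hdegmap : 0 < (p.map (algebraMap ℝ ℂ)).degree := by
      rw [Polynomial.degree_map_eq_of_injective (algebraMap ℝ ℂ).injective]
      apply Polynomial.natDegree_pos_iff_degree_pos.mp
      omega
    obtain ⟨z, hz⟩ := Complex.exists_root hdegmap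
    have hz' : Polynomial.aeval z p = 0 := by
      rwa [Polynomial.aeval_def, Polynomial.eval₂_eq_eval_map]
    have hzim : z.im = 0 := hroots z hz'
    set r := z.re with hr
    have hzr : z = (r : ℂ) := Complex.ext rfl (by simpa using hzim)
    have hpr : p.eval r = 0 := by
      have h1 : Polynomial.aeval ((r : ℂ)) p = 0 := hzr ▸ hz'
      have h3 : algebraMap ℝ ℂ (Polynomial.aeval r p) = 0 := by
        rw [← Polynomial.aeval_algebraMap_apply]
        simpa using h1
      have h4 : Polynomial.aeval r p = p.eval r := by simp
      rw [h4] at h3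
      simpa using h3
    obtain ⟨q, hq⟩ := (Polynomial.dvd_iff_isRoot.mpr hpr)
    have hq0 : q ≠ 0 := by
      rintro rfl
      simp at hq
      exact hp0 hq
    have hqdeg : q.natDegree = n := by
      have := Polynomial.natDegree_mul (Polynomial.X_sub_C_ne_zero r) hq0
      rw [← hq, Polynomial.natDegree_X_sub_C] at this
      omega
    have hqroots : ∀ w : ℂ, Polynomial.aeval w q = 0 → w.im = 0 := by
      intro w hw
      apply hroots
      rw [hq, map_mul, hw, mul_zero]
    have hqx : q.eval x ≠ 0 := by
      intro h
      apply hx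
      rw [hq, Polynomial.eval_mul, h, mul_zero]
    obtain ⟨hnn, -⟩ := ih q hqdeg hqroots x hqx
    have hxr : x - r ≠ 0 := by
      intro h
      apply hx
      rw [hq, Polynomial.eval_mul]
      simp [h]
    have hexp : (p.derivative.eval x) ^ 2 -
        p.eval x * (p.derivative.derivative.eval x)
        = (q.eval x) ^ 2 + (x - r) ^ 2 *
          ((q.derivative.eval x) ^ 2 -
            q.eval x * (q.derivative.derivative.eval x)) := by
      rw [hq]
      simp only [Polynomial.derivative_mul, Polynomial.derivative_sub,
        Polynomial.derivative_add,
        Polynomial.derivative_X, Polynomial.derivative_C, Polynomial.derivative_one, Polynomial.eval_zero,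
        Polynomial.eval_mul, Polynomial.eval_add, Polynomial.eval_sub,
        Polynomial.eval_X, Polynomial.eval_C, Polynomial.eval_one,
        Polynomial.eval_mul, sub_zero]
      ring
    have hpos : 0 < (q.eval x) ^ 2 := by positivity
    have hsq : 0 ≤ (x - r) ^ 2 := sq_nonneg _
    constructor
    · rw [hexp]; nlinarith
    · intro _; rw [hexp]; nlinarith

theorem laguerre_inequality (p : Polynomial ℝ) (hdeg : 1 ≤ p.natDegree)
    (hroots : ∀ w : ℂ, Polynomial.aeval w p = 0 → w.im = 0)
    (x : ℝ) (hx : p.eval x ≠ 0) :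
    0 < (p.derivative.eval x) ^ 2 - p.eval x * (p.derivative.derivative.eval x) := by
  exact (laguerre_aux p.natDegree p rfl hroots x hx).2 hdeg
end
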